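/- arXiv:1701.08266 — 4 statements merged into one kernel-verified Lean document; each statement's English description precedes it below -/
import Mathlib

section
/- Fix μ > 0, a = b = 7/2, a positive integer K, and T ∈ ℕ with (T:ℝ) > 2/(K·a − 2). Assume q := (T+1)(T + K·a + 1)·λ/(T+2)² < 1, where λ = μ/(μ + b). Then the user blocking probability satisfies the strict upper bound P_b(K,T) < P_K(T+1) / ((T+1)·(1 − q)²). -/
open scoped BigOperators

/-- The distribution of the number of users in the coverage of a cluster of `K` RRUs:
`P_K(n) = b^{Ka} μ^n Γ(n + Ka) / ((μ + b)^{Ka+n} Γ(Ka) n!)` with `a = b = 7/2`. -/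
noncomputable def Puser (μ : ℝ) (K : ℕ) (n : ℕ) : ℝ :=
  (7/2 : ℝ) ^ ((K : ℝ) * (7/2)) * μ ^ n * Real.Gamma ((n : ℝ) + (K : ℝ) * (7/2)) /
    ((μ + 7/2) ^ ((K : ℝ) * (7/2) + (n : ℝ)) * Real.Gamma ((K : ℝ) * (7/2)) *
      (n.factorial : ℝ))

/-- The `n`-th summand of the user blocking probability: `((n − T)/n)·P_K(n)` for
`n ≥ T + 1`, and `0` otherwise. -/
noncomputable def blockTerm (μ : ℝ) (K T : ℕ) (n : ℕ) : ℝ :=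
  if T + 1 ≤ n then (((n : ℝ) - (T : ℝ)) / (n : ℝ)) * Puser μ K n else 0

/-- The user blocking probability `P_b(K,T) = Σ_{n=T+1}^∞ ((n − T)/n)·P_K(n)`. -/
noncomputable def Pblock (μ : ℝ) (K T : ℕ) : ℝ := ∑' n : ℕ, blockTerm μ K T n

/-! Put `u m = P_K(T+1+m) / (T+1+m)`, so that `P_b(K,T) = Σ (m+1) u m`. The recurrence
`P_K(n+1) = λ (n+Ka)/(n+1) P_K(n)` gives `u (m+1) = λ f(T+1+m) u m` with `f x = x (x+Ka)/(x+1)²`.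
Since `f` strictly decreases on `[Ka/(Ka-2), ∞)` and `T + 1` lies in that interval, every ratio is
at most `q = λ f(T+1)`, the second one strictly, whence `Σ (m+1) u m < u 0 Σ (m+1) qᵐ = u 0/(1-q)²`. -/

open Set

theorem strictAntiOn_mul_add_div_add_one_sq {A : ℝ} (hA : 2 < A) :
    StrictAntiOn (fun x : ℝ => x * (x + A) / (x + 1) ^ 2) (Ici (A / (A - 2))) := by
  intro x hx y _ hxy
  have hx' : A ≤ (A - 2) * x := by
    rw [mem_Ici, div_le_iff₀ (by linarith)] at hx; linarith
  have hx0 : 0 < x := by nlinarith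
  have hy0 : 0 < y := hx0.trans hxy
  rw [div_lt_div_iff₀ (by positivity) (by positivity)]
  -- `f x - f y` is `(y - x) ((A - 2) x y - x - y - A) / ((x + 1) (y + 1))²`
  nlinarith [mul_pos (sub_pos.mpr hxy) (sub_pos.mpr hxy),
    mul_nonneg (sub_pos.mpr hxy).le (sub_nonneg.mpr hx'), mul_pos (sub_pos.mpr hxy) hx0]

theorem div_sub_two_le_add_one {A t : ℝ} (hA : 2 < A) (ht : 2 / (A - 2) < t) :
    A / (A - 2) ≤ t + 1 := by
  have : A / (A - 2) = 2 / (A - 2) + 1 := by field_simp [(sub_pos.2 hA).ne']; ring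
  linarith

theorem tsum_succ_mul_lt_of_ratio_le {u r : ℕ → ℝ} {q : ℝ} (hu : ∀ m, 0 < u m)
    (hstep : ∀ m, u (m + 1) = r m * u m) (hr : ∀ m, r m ≤ q) {i : ℕ} (hi : r i < q) (hq : q < 1) :
    ∑' m : ℕ, ((m : ℝ) + 1) * u m < u 0 / (1 - q) ^ 2 := by
  have hq₀ : 0 ≤ q := by nlinarith [hstep 0, hu 0, hu 1, hr 0]
  have hgeom (m : ℕ) : u m ≤ q ^ m * u 0 :=
    le_geom hq₀ m fun k _ => (hstep k).trans_le (mul_le_mul_of_nonneg_right (hr k) (hu k).le)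
  have hsum : HasSum (fun m : ℕ => ((m : ℝ) + 1) * (q ^ m * u 0)) (u 0 / (1 - q) ^ 2) := by
    have := (hasSum_choose_mul_geometric_of_norm_lt_one 1
      (by rwa [Real.norm_eq_abs, abs_of_nonneg hq₀])).mul_right (u 0)
    simp only [Nat.choose_one_right, Nat.cast_add, Nat.cast_one, one_add_one_eq_two, one_div,
      mul_assoc] at this
    rwa [div_eq_inv_mul]
  have hle (m : ℕ) : ((m : ℝ) + 1) * u m ≤ ((m : ℝ) + 1) * (q ^ m * u 0) := by
    gcongr
    exact hgeom m
  rw [← hsum.tsum_eq]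
  refine Summable.tsum_lt_tsum (i := i + 1) hle ?_ ?_ hsum.summable
  · gcongr
    calc u (i + 1) = r i * u i := hstep i
      _ < q * u i := mul_lt_mul_of_pos_right hi (hu i)
      _ ≤ q * (q ^ i * u 0) := mul_le_mul_of_nonneg_left (hgeom i) hq₀
      _ = q ^ (i + 1) * u 0 := by ring
  · exact hsum.summable.of_nonneg_of_le (fun m => mul_nonneg (by positivity) (hu m).le) hle

theorem Puser_pos {μ : ℝ} (hμ : 0 < μ) {K : ℕ} (hK : 0 < K) (n : ℕ) : 0 < Puser μ K n := by
  have hA : (0 : ℝ) < K * (7 / 2) := by positivity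
  unfold Puser
  have := Real.Gamma_pos_of_pos hA
  have := Real.Gamma_pos_of_pos (add_pos_of_nonneg_of_pos n.cast_nonneg hA)
  positivity

theorem Puser_succ_div_succ {μ : ℝ} (hμ : 0 ≤ μ) {K : ℕ} (hK : 0 < K) {n : ℕ} (hn : n ≠ 0) :
    Puser μ K (n + 1) / ((n + 1 : ℕ) : ℝ) =
      μ / (μ + 7 / 2) * ((n : ℝ) * (n + K * (7 / 2)) / ((n : ℝ) + 1) ^ 2) * (Puser μ K n / n) := by
  have hb : (0 : ℝ) < μ + 7 / 2 := by linarith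
  have hnA : (0 : ℝ) < n + K * (7 / 2) := by positivity
  unfold Puser
  rw [Nat.factorial_succ, pow_succ, Nat.cast_succ,
    show (n : ℝ) + 1 + K * (7 / 2) = n + K * (7 / 2) + 1 by ring, Real.Gamma_add_one hnA.ne',
    show (K : ℝ) * (7 / 2) + (n + 1) = K * (7 / 2) + n + 1 by ring, Real.rpow_add_one hb.ne']
  have := Real.rpow_pos_of_pos hb ((K : ℝ) * (7 / 2) + n)
  have := Real.Gamma_pos_of_pos (by positivity : (0 : ℝ) < K * (7 / 2))
  have := Nat.factorial_pos n
  push_cast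
  field_simp

theorem Pblock_eq_tsum (μ : ℝ) (K T : ℕ) :
    Pblock μ K T = ∑' m : ℕ, ((m : ℝ) + 1) * (Puser μ K (m + (T + 1)) / ((T : ℝ) + 1 + m)) := by
  have hshift (m : ℕ) : blockTerm μ K T (m + (T + 1)) =
      ((m : ℝ) + 1) * (Puser μ K (m + (T + 1)) / ((T : ℝ) + 1 + m)) := by
    rw [blockTerm, if_pos (by omega)]
    push_cast
    ring
  simp_rw [Pblock, ← hshift]
  refine ((add_left_injective (T + 1)).tsum_eq (f := blockTerm μ K T) fun n hn => ?_).symm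
  have : T + 1 ≤ n := by_contra fun h => hn (if_neg h)
  exact ⟨n - (T + 1), Nat.sub_add_cancel this⟩

/-- strict upper bound on the user blocking probability:
`P_b(K,T) < P_K(T+1) / ((T+1)(1 − q)²)` where
`q = (T+1)(T+Ka+1)λ/(T+2)² < 1` and `λ = μ/(μ+b)`. -/
theorem Pblock_upper_bound (μ : ℝ) (hμ : 0 < μ) (K : ℕ) (hK : 0 < K) (T : ℕ)
    (hT : (T : ℝ) > 2 / ((K : ℝ) * (7/2) - 2))
    (hq : ((T : ℝ) + 1) * ((T : ℝ) + (K : ℝ) * (7/2) + 1) * (μ / (μ + 7/2)) /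
        ((T : ℝ) + 2) ^ 2 < 1) :
    Pblock μ K T <
      Puser μ K (T + 1) /
        (((T : ℝ) + 1) *
          (1 - ((T : ℝ) + 1) * ((T : ℝ) + (K : ℝ) * (7/2) + 1) * (μ / (μ + 7/2)) /
              ((T : ℝ) + 2) ^ 2) ^ 2) := by
  set A : ℝ := (K : ℝ) * (7 / 2)
  set lam : ℝ := μ / (μ + 7 / 2)
  set q : ℝ := ((T : ℝ) + 1) * ((T : ℝ) + A + 1) * lam / ((T : ℝ) + 2) ^ 2
  set f : ℝ → ℝ := fun x => x * (x + A) / (x + 1) ^ 2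
  set u : ℕ → ℝ := fun m => Puser μ K (m + (T + 1)) / ((T : ℝ) + 1 + m)
  have hA : 2 < A := by
    have : (1 : ℝ) ≤ K := by exact_mod_cast hK
    simp only [A]
    linarith
  have hT₁ : (T : ℝ) + 1 ∈ Ici (A / (A - 2)) := div_sub_two_le_add_one hA hT
  have hf_anti : StrictAntiOn f (Ici (A / (A - 2))) := strictAntiOn_mul_add_div_add_one_sq hA
  have hu_succ (m : ℕ) : u (m + 1) = lam * f (T + 1 + m) * u m := by
    have := Puser_succ_div_succ hμ.le hK (n := m + (T + 1)) (by omega)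
    push_cast at this
    simp only [u, f, show m + 1 + (T + 1) = m + (T + 1) + 1 by ring]
    convert this using 2 <;> push_cast <;> ring
  have hq_eq : q = lam * f (T + 1) := by simp only [q, f]; ring
  have hbound : ∑' m : ℕ, ((m : ℝ) + 1) * u m < u 0 / (1 - q) ^ 2 := by
    refine tsum_succ_mul_lt_of_ratio_le (fun m => div_pos (Puser_pos hμ hK _) (by positivity))
      hu_succ (fun m => ?_) (i := 1) ?_ hq <;> rw [hq_eq] <;> gcongr
    · exact hf_anti.antitoneOn hT₁ (hT₁.out.trans (by simp)) (by simp)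
    · exact hf_anti hT₁ (hT₁.out.trans (by simp)) (by simp)
  have hu₀ : u 0 = Puser μ K (T + 1) / ((T : ℝ) + 1) := by simp [u]
  rwa [Pblock_eq_tsum, ← div_div, ← hu₀]
end

section
/- Fix μ > 0, a = b = 7/2, a positive integer K, and T ∈ ℕ. Then the blocking probability at capacity T+1 admits the representation P_b(K, T+1) = Σ_{n=T+1}^∞ a_n^K·λ·((n − T)/n)·P_K(n), where a_n^K = n(n + K·a)/(n+1)² and λ = μ/(μ + b). -/
open scoped BigOperators

lemma Puser_succ (μ : ℝ) (hμ : 0 < μ) (K : ℕ) (hK : 0 < K) (n : ℕ) :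
    Puser μ K (n + 1) =
      (μ / (μ + 7/2)) * (((n : ℝ) + (K : ℝ) * (7/2)) / ((n : ℝ) + 1)) * Puser μ K n := by
  have hKa : (0 : ℝ) < (K : ℝ) * (7/2) := by positivity
  have hb : (0 : ℝ) < μ + 7/2 := by linarith
  have hnKa : (0 : ℝ) < (n : ℝ) + (K : ℝ) * (7/2) := by positivity
  have hΓ : Real.Gamma ((K : ℝ) * (7/2)) ≠ 0 := (Real.Gamma_pos_of_pos hKa).ne'
  have hΓn : (0:ℝ) < Real.Gamma ((n : ℝ) + (K : ℝ) * (7/2)) := Real.Gamma_pos_of_pos hnKa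
  have hfac : ((n.factorial : ℝ)) ≠ 0 := by exact_mod_cast n.factorial_ne_zero
  unfold Puser
  rw [Nat.factorial_succ]
  push_cast
  have h1 : ((n:ℝ) + 1) + (K : ℝ) * (7/2) = ((n:ℝ) + (K:ℝ) * (7/2)) + 1 := by ring
  have h2 : (K : ℝ) * (7/2) + ((n:ℝ) + 1) = ((K:ℝ) * (7/2) + (n:ℝ)) + 1 := by ring
  rw [h1, h2, Real.Gamma_add_one hnKa.ne', Real.rpow_add_one hb.ne']
  have hpow : (0:ℝ) < (μ + 7/2) ^ ((K : ℝ) * (7/2) + (n : ℝ)) := Real.rpow_pos_of_pos hb _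
  field_simp
  ring

/-- representation of the blocking probability at capacity `T + 1`:
`P_b(K,T+1) = Σ_{n=T+1}^∞ a_n^K·λ·((n−T)/n)·P_K(n)` with
`a_n^K = n(n+Ka)/(n+1)²` and `λ = μ/(μ+b)`. -/
theorem Pblock_succ_repr (μ : ℝ) (hμ : 0 < μ) (K : ℕ) (hK : 0 < K) (T : ℕ) :
    Pblock μ K (T + 1) =
      ∑' n : ℕ,
        (if T + 1 ≤ n then
          ((n : ℝ) * ((n : ℝ) + (K : ℝ) * (7/2)) / ((n : ℝ) + 1) ^ 2) *
            (μ / (μ + 7/2)) * (((n : ℝ) - (T : ℝ)) / (n : ℝ)) * Puser μ K n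
        else 0) := by
  have hshift : ∀ n : ℕ, blockTerm μ K (T + 1) (n + 1) =
      (if T + 1 ≤ n then
          ((n : ℝ) * ((n : ℝ) + (K : ℝ) * (7/2)) / ((n : ℝ) + 1) ^ 2) *
            (μ / (μ + 7/2)) * (((n : ℝ) - (T : ℝ)) / (n : ℝ)) * Puser μ K n
        else 0) := by
    intro n
    unfold blockTerm
    by_cases h : T + 1 ≤ n
    · have h' : T + 1 + 1 ≤ n + 1 := by omega
      rw [if_pos h', if_pos h, Puser_succ μ hμ K hK n]
      have hn : (0:ℝ) < (n : ℝ) := by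
        exact_mod_cast Nat.lt_of_lt_of_le (Nat.succ_pos T) h
      have hn1 : ((n:ℝ) + 1) ≠ 0 := by positivity
      push_cast
      field_simp
      ring
    · have h' : ¬ (T + 1 + 1 ≤ n + 1) := by omega
      rw [if_neg h', if_neg h]
  have h0 : Function.support (blockTerm μ K (T + 1)) ⊆ Set.range (fun n : ℕ => n + 1) := by
    intro x hx
    rcases x with _ | x
    · exfalso
      apply hx
      unfold blockTerm
      rw [if_neg (by omega)]
    · exact ⟨x, rfl⟩
  have hinj : Function.Injective (fun n : ℕ => n + 1) := fun a b h => by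
    simpa using h
  calc Pblock μ K (T + 1) = ∑' n : ℕ, blockTerm μ K (T + 1) (n + 1) :=
        (hinj.tsum_eq h0).symm
    _ = _ := tsum_congr hshift
end

section
/- (Proposition 1, over-provisioned case) Fix μ > 0, a = b = 7/2, and a real T̄ with T̄ > μ. Then the user blocking probability at equivalent per-RRU capacity T̄ vanishes in the large-cluster limit: lim_{K→∞} P_b(K, ⌊K·T̄⌋) = 0, where the limit is over positive integers K tending to infinity. -/
open scoped BigOperators

/-!
`P_K` is the negative binomial law with shape `s = 7K/2` and parameter `q = μ/(μ + 7/2)`, so by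
the binomial series for `(1 - qz)^(-s)` its generating function is
`∑ P_K(n) zⁿ = (7/2 / (μ + 7/2 - μz))^s`, and its mean is `Kμ`. Since `(n - T)/n ≤ 1`, the
Chernoff bound gives `P_b(K, T) ≤ z^(-(T+1)) ∑ P_K(n) zⁿ` for every `z ≥ 1`, which for
`T = ⌊K T̄⌋` is at most `ρ(z)^K` with `ρ(z) = z^(-T̄) (7/2 / (μ + 7/2 - μz))^(7/2)`.
As `ρ(1) = 1` and `ρ'(1) = μ - T̄ < 0`, some `z > 1` has `ρ(z) < 1`.
-/

open Filter Topology
open scoped Nat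

namespace Real

lemma Gamma_add_nat_eq_ascPochhammer_mul {s : ℝ} (hs : ∀ m : ℕ, s ≠ -m) (n : ℕ) :
    Gamma (s + n) = (ascPochhammer ℝ n).eval s * Gamma s := by
  induction n with
  | zero => simp
  | succ n ih =>
    have hsn : s + n ≠ 0 := fun h => hs n (eq_neg_of_add_eq_zero_left h)
    rw [Nat.cast_succ, ← add_assoc, Gamma_add_one hsn, ih, ascPochhammer_succ_eval]
    ring

lemma Gamma_add_nat_div_eq_choose {s : ℝ} (hs : ∀ m : ℕ, s ≠ -m) (n : ℕ) :
    Gamma (s + n) / (Gamma s * n !) = Ring.choose (s + n - 1) n := by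
  have hfact := Ring.factorial_nsmul_multichoose_eq_ascPochhammer s n
  rw [nsmul_eq_mul, Polynomial.ascPochhammer_smeval_eq_eval, Ring.multichoose_eq] at hfact
  rw [Gamma_add_nat_eq_ascPochhammer_mul hs, ← hfact]
  field_simp [Gamma_ne_zero hs]

lemma hasSum_choose_mul_pow (s : ℝ) {x : ℝ} (hx : |x| < 1) :
    HasSum (fun n : ℕ => Ring.choose (s + n - 1) n * x ^ n) (1 / (1 - x) ^ s) := by
  have hx' : x ∈ Metric.eball (0 : ℝ) 1 := by simpa [edist_dist, Real.dist_eq] using hx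
  simpa [FormalMultilinearSeries.ofScalars_apply_eq, mul_comm] using
    (one_div_one_sub_rpow_hasFPowerSeriesOnBall_zero s).hasSum hx'

end Real

lemma HasDerivAt.eventually_nhdsGT_lt {f : ℝ → ℝ} {f' x : ℝ} (hf : HasDerivAt f f' x)
    (hf' : f' < 0) : ∀ᶠ y in 𝓝[>] x, f y < f x := by
  filter_upwards [hf.hasDerivWithinAt.limsup_slope_le' (lt_irrefl x) hf',
    self_mem_nhdsWithin] with y hslope (hxy : x < y)
  rw [slope_def_field, div_neg_iff] at hslope
  rcases hslope with ⟨-, h⟩ | ⟨h, -⟩ <;> linarith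

section Puser

variable {μ : ℝ}

lemma Puser_nonneg (hμ : 0 ≤ μ) (K n : ℕ) : 0 ≤ Puser μ K n := by
  unfold Puser
  positivity

lemma Puser_eq (hμ : 0 ≤ μ) {K : ℕ} (hK : K ≠ 0) (n : ℕ) :
    Puser μ K n = (7/2 / (μ + 7/2)) ^ ((K : ℝ) * (7/2)) *
      (Ring.choose ((K : ℝ) * (7/2) + n - 1) n * (μ / (μ + 7/2)) ^ n) := by
  have hs : ∀ m : ℕ, (K : ℝ) * (7/2) ≠ -m := fun m h => by
    have : (0 : ℝ) < K := by positivity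
    linarith [(m.cast_nonneg : (0 : ℝ) ≤ m)]
  have hb : 0 < μ + 7/2 := by linarith
  rw [← Real.Gamma_add_nat_div_eq_choose hs, Puser, Real.rpow_add hb, Real.rpow_natCast,
    Real.div_rpow (by norm_num) hb.le, div_pow, add_comm (n : ℝ)]
  have := Real.Gamma_ne_zero hs
  field_simp

lemma hasSum_Puser_mul_pow (hμ : 0 ≤ μ) {K : ℕ} (hK : K ≠ 0) {z : ℝ} (hz : 0 ≤ z)
    (hzμ : μ * z < μ + 7/2) :
    HasSum (fun n => Puser μ K n * z ^ n) ((7/2 / (μ + 7/2 - μ * z)) ^ ((K : ℝ) * (7/2))) := by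
  have hb : 0 < μ + 7/2 := by linarith
  have hq : |μ / (μ + 7/2) * z| < 1 := by
    rw [abs_of_nonneg (by positivity), div_mul_eq_mul_div, div_lt_one hb]
    exact hzμ
  have hterm (n : ℕ) : Puser μ K n * z ^ n = (7/2 / (μ + 7/2)) ^ ((K : ℝ) * (7/2)) *
      (Ring.choose ((K : ℝ) * (7/2) + n - 1) n * (μ / (μ + 7/2) * z) ^ n) := by
    rw [Puser_eq hμ hK, mul_pow]
    ring
  have hpos : 0 < 1 - μ / (μ + 7/2) * z := by linarith [(abs_lt.mp hq).2]
  have hlim : (7/2 / (μ + 7/2)) ^ ((K : ℝ) * (7/2)) *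
      (1 / (1 - μ / (μ + 7/2) * z) ^ ((K : ℝ) * (7/2))) =
      (7/2 / (μ + 7/2 - μ * z)) ^ ((K : ℝ) * (7/2)) := by
    rw [mul_one_div, ← Real.div_rpow (by positivity) hpos.le]
    congr 1
    field_simp
  simpa only [hterm, hlim] using (Real.hasSum_choose_mul_pow ((K : ℝ) * (7/2)) hq).mul_left
    ((7/2 / (μ + 7/2)) ^ ((K : ℝ) * (7/2)))

lemma blockTerm_nonneg (hμ : 0 ≤ μ) (K T n : ℕ) : 0 ≤ blockTerm μ K T n := by
  unfold blockTerm
  split_ifs with hn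
  · have : (T : ℝ) + 1 ≤ n := by exact_mod_cast hn
    exact mul_nonneg (div_nonneg (by linarith) n.cast_nonneg) (Puser_nonneg hμ K n)
  · exact le_rfl

lemma Pblock_nonneg (hμ : 0 ≤ μ) (K T : ℕ) : 0 ≤ Pblock μ K T :=
  tsum_nonneg (blockTerm_nonneg hμ K T)

lemma blockTerm_le (hμ : 0 ≤ μ) (K T n : ℕ) {z : ℝ} (hz : 1 ≤ z) :
    blockTerm μ K T n ≤ Puser μ K n * z ^ n / z ^ (T + 1) := by
  have hP := Puser_nonneg hμ K n
  have hzT : 0 < z ^ (T + 1) := by positivity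
  unfold blockTerm
  split_ifs with hn
  · have hn' : (T : ℝ) + 1 ≤ n := by exact_mod_cast hn
    have hfrac : ((n : ℝ) - T) / n ≤ 1 := div_le_one_of_le₀ (by linarith) n.cast_nonneg
    calc ((n : ℝ) - T) / n * Puser μ K n ≤ Puser μ K n := mul_le_of_le_one_left hP hfrac
      _ ≤ Puser μ K n * z ^ n / z ^ (T + 1) := by
        rw [le_div_iff₀ hzT]
        exact mul_le_mul_of_nonneg_left (pow_le_pow_right₀ hz hn) hP
  · positivity

lemma Pblock_le (hμ : 0 ≤ μ) {K : ℕ} (hK : K ≠ 0) (T : ℕ) {z : ℝ} (hz : 1 ≤ z)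
    (hzμ : μ * z < μ + 7/2) :
    Pblock μ K T ≤ (7/2 / (μ + 7/2 - μ * z)) ^ ((K : ℝ) * (7/2)) / z ^ (T + 1) := by
  have hmgf := (hasSum_Puser_mul_pow hμ hK (by linarith) hzμ).div_const (z ^ (T + 1))
  have hle (n : ℕ) := blockTerm_le hμ K T n hz
  exact (Summable.tsum_le_tsum hle
    (hmgf.summable.of_nonneg_of_le (blockTerm_nonneg hμ K T) hle) hmgf.summable).trans_eq
    hmgf.tsum_eq

end Puser

noncomputable def chernoffRate (μ Tbar z : ℝ) : ℝ :=
  z ^ (-Tbar) * (7/2 / (μ + 7/2 - μ * z)) ^ (7/2 : ℝ)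

lemma Pblock_floor_le_chernoffRate_pow {μ : ℝ} (hμ : 0 ≤ μ) {K : ℕ} (hK : K ≠ 0) (Tbar : ℝ)
    {z : ℝ} (hz : 1 ≤ z) (hzμ : μ * z < μ + 7/2) :
    Pblock μ K ⌊(K : ℝ) * Tbar⌋₊ ≤ chernoffRate μ Tbar z ^ K := by
  have hB : 0 ≤ 7/2 / (μ + 7/2 - μ * z) := div_nonneg (by norm_num) (by linarith)
  have hz0 : 0 ≤ z := by linarith
  have hfloor : z ^ ((K : ℝ) * Tbar) ≤ z ^ (⌊(K : ℝ) * Tbar⌋₊ + 1) := by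
    rw [← Real.rpow_natCast]
    exact Real.rpow_le_rpow_of_exponent_le hz (by exact_mod_cast (Nat.lt_floor_add_one _).le)
  calc Pblock μ K ⌊(K : ℝ) * Tbar⌋₊
      ≤ (7/2 / (μ + 7/2 - μ * z)) ^ ((K : ℝ) * (7/2)) / z ^ (⌊(K : ℝ) * Tbar⌋₊ + 1) :=
        Pblock_le hμ hK _ hz hzμ
    _ ≤ (7/2 / (μ + 7/2 - μ * z)) ^ ((K : ℝ) * (7/2)) / z ^ ((K : ℝ) * Tbar) :=
        div_le_div_of_nonneg_left (by positivity) (by positivity) hfloor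
    _ = chernoffRate μ Tbar z ^ K := by
        rw [chernoffRate, mul_pow, ← Real.rpow_natCast, ← Real.rpow_natCast (_ ^ _),
          ← Real.rpow_mul hz0, ← Real.rpow_mul hB, neg_mul, Real.rpow_neg hz0, div_eq_inv_mul,
          mul_comm Tbar, mul_comm (7/2 : ℝ) (K : ℝ)]

lemma chernoffRate_one (μ Tbar : ℝ) : chernoffRate μ Tbar 1 = 1 := by
  norm_num [chernoffRate]

lemma hasDerivAt_chernoffRate_one (μ Tbar : ℝ) :
    HasDerivAt (chernoffRate μ Tbar) (μ - Tbar) 1 := by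
  have hpow := Real.hasDerivAt_rpow_const (x := 1) (p := -Tbar) (Or.inl one_ne_zero)
  have hden : HasDerivAt (fun z => μ + 7/2 - μ * z) (-μ) 1 := by
    simpa using ((hasDerivAt_id (1 : ℝ)).const_mul μ).const_sub (μ + 7/2)
  have hmgf := ((hden.inv (by norm_num)).const_mul (7/2 : ℝ)).rpow_const (p := 7/2)
    (Or.inr (by norm_num))
  refine (hpow.mul hmgf).congr_deriv ?_
  norm_num
  ring

lemma exists_chernoffRate_lt_one {μ Tbar : ℝ} (hT : μ < Tbar) :
    ∃ z, 1 < z ∧ μ * z < μ + 7/2 ∧ chernoffRate μ Tbar z < 1 := by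
  have hcont : ContinuousAt (fun z => μ * z) 1 := by fun_prop
  have hnear : ∀ᶠ z in 𝓝[>] (1 : ℝ), 1 < z ∧ μ * z < μ + 7/2 ∧ chernoffRate μ Tbar z < 1 := by
    filter_upwards [self_mem_nhdsWithin,
      nhdsWithin_le_nhds (hcont.eventually_lt_const (by linarith : μ * 1 < μ + 7/2)),
      (hasDerivAt_chernoffRate_one μ Tbar).eventually_nhdsGT_lt (sub_neg.mpr hT)]
      with z hz hzμ hρ
    exact ⟨hz, hzμ, chernoffRate_one μ Tbar ▸ hρ⟩
  exact hnear.exists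

/-- Proposition 1, over-provisioned case: if `T̄ > μ` then
`P_b(K, ⌊K·T̄⌋) → 0` as `K → ∞`. -/
theorem Pblock_limit_over (μ : ℝ) (hμ : 0 < μ) (Tbar : ℝ) (hT : Tbar > μ) :
    Filter.Tendsto (fun K : ℕ => Pblock μ K ⌊(K : ℝ) * Tbar⌋₊)
      Filter.atTop (nhds 0) := by
  obtain ⟨z, hz, hzμ, hρ⟩ := exists_chernoffRate_lt_one hT
  have hρ0 : 0 ≤ chernoffRate μ Tbar z :=
    mul_nonneg (by positivity) (Real.rpow_nonneg (div_nonneg (by norm_num) (by linarith)) _)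
  refine squeeze_zero' (Eventually.of_forall fun K => Pblock_nonneg hμ.le K _) ?_
    (tendsto_pow_atTop_nhds_zero_of_lt_one hρ0 hρ)
  filter_upwards [eventually_ne_atTop 0] with K hK
  exact Pblock_floor_le_chernoffRate_pow hμ.le hK Tbar hz.le hzμ
end

section
/- (Proposition 1, under-provisioned case) Fix μ > 0, a = b = 7/2, and a real T̄ with 0 < T̄ < μ. Then lim_{K→∞} P_b(K, ⌊K·T̄⌋) = 1 − T̄/μ, where the limit is over positive integers K tending to infinity. -/
open scoped BigOperators

/-! Under `P_K`, the number of users is negative binomial with shape `7K/2` and parameter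
`p = μ/(μ + 7/2)`, so it has mean `Kμ` and variance `2Kμ(μ + 7/2)/7`. By Chebyshev's
inequality its mass concentrates in `|n - Kμ| < Kδ`, where the weight `(n - T)/n` of
`P_b(K, ⌊K·T̄⌋)` is within `O(δ + 1/K)` of `1 - T̄/μ`. -/

open Real Filter Topology Polynomial

theorem Real.Gamma_add_natCast_eq_mul {s : ℝ} (hs : ∀ k : ℕ, s ≠ -k) (n : ℕ) :
    Gamma (s + n) = Gamma s * (ascPochhammer ℝ n).eval s := by
  induction n with
  | zero => simp
  | succ n ih =>
    have : s + n ≠ 0 := fun h => hs n (by linarith)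
    rw [Nat.cast_succ, ← add_assoc, Gamma_add_one this, ih, ascPochhammer_succ_eval]
    ring

theorem Ring.choose_add_natCast_sub_one (r : ℝ) (n : ℕ) :
    Ring.choose (r + n - 1) n = (ascPochhammer ℝ n).eval r / n.factorial := by
  rw [← Ring.multichoose_eq, eq_div_iff (by positivity), ← ascPochhammer_smeval_eq_eval,
    ← Ring.factorial_nsmul_multichoose_eq_ascPochhammer, nsmul_eq_mul, mul_comm]

noncomputable def negBinomial (r p : ℝ) (n : ℕ) : ℝ :=
  (ascPochhammer ℝ n).eval r / n.factorial * (1 - p) ^ r * p ^ n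

section negBinomial

variable (r : ℝ) {p : ℝ}

theorem hasSum_negBinomial (hp0 : 0 ≤ p) (hp1 : p < 1) : HasSum (negBinomial r p) 1 := by
  have hq : 0 < 1 - p := by linarith
  have hball : p ∈ Metric.eball (0 : ℝ) 1 := by
    simpa [enorm_eq_nnnorm, ← NNReal.coe_lt_one, abs_of_nonneg hp0] using hp1
  have h := ((one_div_one_sub_rpow_hasFPowerSeriesOnBall_zero r).hasSum hball).mul_left
    ((1 - p) ^ r)
  simp only [FormalMultilinearSeries.ofScalars_apply_eq, Ring.choose_add_natCast_sub_one,
    zero_add, smul_eq_mul, mul_one_div_cancel (rpow_pos_of_pos hq r).ne'] at h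
  exact h.congr_fun fun n => by unfold negBinomial; ring

theorem natCast_succ_mul_negBinomial_succ (hp1 : p < 1) (n : ℕ) :
    (n + 1) * negBinomial r p (n + 1) = r * p / (1 - p) * negBinomial (r + 1) p n := by
  have hq : 0 < 1 - p := by linarith
  simp only [negBinomial, ascPochhammer_succ_left, eval_mul, eval_X, eval_comp, eval_add,
    eval_one, Nat.factorial_succ, Nat.cast_mul, rpow_add_one hq.ne', pow_succ]
  field_simp
  push_cast
  ring

theorem hasSum_natCast_mul_negBinomial (hp0 : 0 ≤ p) (hp1 : p < 1) :
    HasSum (fun n : ℕ => n * negBinomial r p n) (r * p / (1 - p)) := by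
  rw [← hasSum_nat_add_iff' 1]
  simpa [natCast_succ_mul_negBinomial_succ r hp1] using
    (hasSum_negBinomial (r + 1) hp0 hp1).mul_left (r * p / (1 - p))

theorem hasSum_sq_mul_negBinomial (hp0 : 0 ≤ p) (hp1 : p < 1) :
    HasSum (fun n : ℕ => (n : ℝ) ^ 2 * negBinomial r p n)
      (r * p / (1 - p) * ((r + 1) * p / (1 - p) + 1)) := by
  rw [← hasSum_nat_add_iff' 1, Finset.sum_range_one, Nat.cast_zero, zero_pow two_ne_zero,
    zero_mul, sub_zero]
  have h := ((hasSum_natCast_mul_negBinomial (r + 1) hp0 hp1).add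
    (hasSum_negBinomial (r + 1) hp0 hp1)).mul_left (r * p / (1 - p))
  refine h.congr_fun fun n => ?_
  push_cast
  rw [sq, mul_assoc, natCast_succ_mul_negBinomial_succ r hp1]
  ring

theorem hasSum_sq_sub_mean_mul_negBinomial (hp0 : 0 ≤ p) (hp1 : p < 1) :
    HasSum (fun n : ℕ => ((n : ℝ) - r * p / (1 - p)) ^ 2 * negBinomial r p n)
      (r * p / (1 - p) ^ 2) := by
  have hq : 1 - p ≠ 0 := by linarith
  set m := r * p / (1 - p)
  have h := ((hasSum_sq_mul_negBinomial r hp0 hp1).sub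
    ((hasSum_natCast_mul_negBinomial r hp0 hp1).mul_left (2 * m))).add
    ((hasSum_negBinomial r hp0 hp1).mul_left (m ^ 2))
  have hV : r * p / (1 - p) * ((r + 1) * p / (1 - p) + 1) - 2 * m * (r * p / (1 - p))
      + m ^ 2 * 1 = r * p / (1 - p) ^ 2 := by
    simp only [m]
    field_simp
    ring
  exact hV ▸ h.congr_fun fun n => by ring

end negBinomial

theorem Puser_eq_negBinomial {μ : ℝ} (hμ : 0 < μ) {K : ℕ} (hK : 0 < K) :
    Puser μ K = negBinomial (K * (7 / 2)) (μ / (μ + 7 / 2)) := by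
  funext n
  have hs : (0 : ℝ) < K * (7 / 2) := by positivity
  have hb : 0 < μ + 7 / 2 := by linarith
  have hq : 1 - μ / (μ + 7 / 2) = 7 / 2 / (μ + 7 / 2) := by field_simp; ring
  rw [Puser, negBinomial, add_comm (n : ℝ), Gamma_add_natCast_eq_mul (fun k => by
      have := k.cast_nonneg (α := ℝ); linarith), rpow_add hb, rpow_natCast, hq,
    div_rpow (by norm_num) hb.le, div_pow]
  have := (Gamma_pos_of_pos hs).ne'
  have := (rpow_pos_of_pos hb ((K : ℝ) * (7 / 2))).ne'
  field_simp

theorem abs_tsum_mul_sub_le_of_hasSum_sq_sub {w f x : ℕ → ℝ} {ℓ m ρ V η B : ℝ}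
    (hw : ∀ n, 0 ≤ w n) (hw1 : HasSum w 1) (hV : HasSum (fun n => (x n - m) ^ 2 * w n) V)
    (hρ : 0 < ρ) (hη : 0 ≤ η) (hB : ∀ n, |f n - ℓ| ≤ B)
    (hnear : ∀ n, |x n - m| < ρ → |f n - ℓ| ≤ η) :
    |∑' n, f n * w n - ℓ| ≤ η + B * V / ρ ^ 2 := by
  have hB0 : 0 ≤ B := (abs_nonneg _).trans (hB 0)
  have hbound :
      ∀ n, ‖(f n - ℓ) * w n‖ ≤ η * w n + B / ρ ^ 2 * ((x n - m) ^ 2 * w n) := by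
    intro n
    rw [Real.norm_eq_abs, abs_mul, abs_of_nonneg (hw n), ← mul_assoc, ← add_mul]
    refine mul_le_mul_of_nonneg_right ?_ (hw n)
    rcases lt_or_ge |x n - m| ρ with hn | hn
    · exact (hnear n hn).trans (le_add_of_nonneg_right (by positivity))
    · have hfar : 1 ≤ (x n - m) ^ 2 / ρ ^ 2 := by
        rw [one_le_div (by positivity), ← sq_abs (x n - m)]
        exact pow_le_pow_left₀ hρ.le hn 2
      calc |f n - ℓ| ≤ B * 1 := by rw [mul_one]; exact hB n
        _ ≤ B * ((x n - m) ^ 2 / ρ ^ 2) := by gcongr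
        _ ≤ η + B / ρ ^ 2 * (x n - m) ^ 2 := by
          rw [mul_div_assoc', div_mul_eq_mul_div]; linarith
  have hsum : Summable fun n => f n * w n := by
    refine (hw1.summable.mul_left (|ℓ| + B)).of_norm_bounded fun n => ?_
    rw [Real.norm_eq_abs, abs_mul, abs_of_nonneg (hw n)]
    refine mul_le_mul_of_nonneg_right ?_ (hw n)
    calc |f n| = |ℓ + (f n - ℓ)| := by ring_nf
      _ ≤ |ℓ| + B := (abs_add_le _ _).trans (by gcongr; exact hB n)
  have hdiff := hsum.hasSum.sub (hw1.mul_left ℓ)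
  rw [mul_one] at hdiff
  have := hdiff.norm_le_of_bounded ((hw1.mul_left η).add (hV.mul_left (B / ρ ^ 2)))
    fun n => by rw [← sub_mul]; exact hbound n
  rw [Real.norm_eq_abs] at this
  convert this using 1
  ring

theorem abs_div_sub_div_le_of_near {μ Tbar κ T x δ : ℝ} (hμ : 0 < μ) (hTbar : 0 ≤ Tbar)
    (hκ : 0 < κ) (hT : |κ * Tbar - T| ≤ 1) (hδ : δ ≤ μ / 2)
    (hx : |x - κ * μ| < κ * δ) :
    |T / x - Tbar / μ| ≤ 2 / (κ * μ) + 2 * Tbar * δ / μ ^ 2 := by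
  have hκδ : 0 < κ * δ := (abs_nonneg _).trans_lt hx
  have hδ0 : 0 < δ := pos_of_mul_pos_right hκδ hκ.le
  obtain ⟨hx₁, -⟩ := abs_lt.mp hx
  have hx0 : κ * μ < 2 * x := by nlinarith
  have hxpos : 0 < x := by nlinarith [mul_pos hκ hμ]
  have hnum : |T * μ - x * Tbar| ≤ μ + Tbar * (κ * δ) := by
    rw [show T * μ - x * Tbar = (T - κ * Tbar) * μ + Tbar * (κ * μ - x) by ring]
    refine (abs_add_le _ _).trans (add_le_add ?_ ?_)
    · rw [abs_mul, abs_of_pos hμ, abs_sub_comm]; nlinarith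
    · rw [abs_mul, abs_of_nonneg hTbar, abs_sub_comm]
      exact mul_le_mul_of_nonneg_left hx.le hTbar
  have hrhs : (2 / (κ * μ) + 2 * Tbar * δ / μ ^ 2) * (x * μ)
      = 2 * x / κ + 2 * Tbar * δ * x / μ := by
    field_simp
  have h1 : μ < 2 * x / κ := by rw [lt_div_iff₀ hκ]; linarith
  have h2 : Tbar * (κ * δ) ≤ 2 * Tbar * δ * x / μ := by
    rw [le_div_iff₀ hμ]
    nlinarith [mul_nonneg hTbar hδ0.le]
  rw [div_sub_div _ _ hxpos.ne' hμ.ne', abs_div, abs_of_pos (mul_pos hxpos hμ),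
    div_le_iff₀ (mul_pos hxpos hμ), hrhs]
  linarith

theorem blockTerm_eq_max_mul (μ : ℝ) (K T n : ℕ) :
    blockTerm μ K T n = max 0 (((n : ℝ) - T) / n) * Puser μ K n := by
  unfold blockTerm
  split_ifs with h
  · rw [max_eq_right (div_nonneg (sub_nonneg.mpr (by norm_cast; omega)) n.cast_nonneg)]
  · rw [max_eq_left (div_nonpos_of_nonpos_of_nonneg (sub_nonpos.mpr (by norm_cast; omega))
      n.cast_nonneg), zero_mul]

theorem abs_Pblock_sub_le {μ Tbar δ : ℝ} (hμ : 0 < μ) (hT0 : 0 ≤ Tbar) (hT : Tbar ≤ μ)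
    {K : ℕ} (hK : 0 < K) (hδ0 : 0 < δ) (hδ : δ ≤ μ / 2) :
    |Pblock μ K ⌊(K : ℝ) * Tbar⌋₊ - (1 - Tbar / μ)|
      ≤ 2 * Tbar * δ / μ ^ 2 + (2 / μ + 2 / 7 * μ * (μ + 7 / 2) / δ ^ 2) / K := by
  set T := ⌊(K : ℝ) * Tbar⌋₊
  have hKpos : (0 : ℝ) < K := Nat.cast_pos.mpr hK
  have hb : 0 < μ + 7 / 2 := by linarith
  have hp0 : 0 ≤ μ / (μ + 7 / 2) := by positivity
  have hp1 : μ / (μ + 7 / 2) < 1 := (div_lt_one hb).mpr (by linarith)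
  have hq : 1 - μ / (μ + 7 / 2) = 7 / 2 / (μ + 7 / 2) := by field_simp; ring
  have hmean : (K : ℝ) * (7 / 2) * (μ / (μ + 7 / 2)) / (1 - μ / (μ + 7 / 2)) = K * μ := by
    rw [hq]; field_simp
  have hvar : (K : ℝ) * (7 / 2) * (μ / (μ + 7 / 2)) / (1 - μ / (μ + 7 / 2)) ^ 2
      = 2 / 7 * K * μ * (μ + 7 / 2) := by
    rw [hq]; field_simp
  have hw := hasSum_negBinomial ((K : ℝ) * (7 / 2)) hp0 hp1
  have hV := hasSum_sq_sub_mean_mul_negBinomial ((K : ℝ) * (7 / 2)) hp0 hp1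
  rw [← Puser_eq_negBinomial hμ hK] at hw hV
  rw [hmean, hvar] at hV
  have hTμ : Tbar / μ ≤ 1 := div_le_one_of_le₀ hT hμ.le
  have hB : ∀ n : ℕ, |max 0 (((n : ℝ) - T) / n) - (1 - Tbar / μ)| ≤ 1 := fun n => by
    have : max 0 (((n : ℝ) - T) / n) ≤ 1 :=
      max_le zero_le_one
        (div_le_one_of_le₀ (by linarith [T.cast_nonneg (α := ℝ)]) n.cast_nonneg)
    rw [abs_le]
    constructor <;> linarith [le_max_left 0 (((n : ℝ) - T) / n), div_nonneg hT0 hμ.le]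
  have hnear : ∀ n : ℕ, |(n : ℝ) - K * μ| < K * δ →
      |max 0 (((n : ℝ) - T) / n) - (1 - Tbar / μ)|
        ≤ 2 / (K * μ) + 2 * Tbar * δ / μ ^ 2 := by
    intro n hn
    have hn0 : (n : ℝ) ≠ 0 := by
      have := mul_le_mul_of_nonneg_left hδ hKpos.le
      have := mul_pos hKpos hμ
      rcases abs_lt.mp hn with ⟨h, -⟩
      nlinarith
    calc |max 0 (((n : ℝ) - T) / n) - (1 - Tbar / μ)|
        = |max (((n : ℝ) - T) / n) 0 - max (1 - Tbar / μ) 0| := by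
          rw [max_comm, max_eq_left (sub_nonneg.mpr hTμ)]
      _ ≤ |((n : ℝ) - T) / n - (1 - Tbar / μ)| := abs_max_sub_max_le_abs _ _ _
      _ = |T / n - Tbar / μ| := by
          rw [sub_div, div_self hn0, ← abs_neg]; ring_nf
      _ ≤ 2 / (K * μ) + 2 * Tbar * δ / μ ^ 2 :=
          abs_div_sub_div_le_of_near hμ hT0 hKpos (Nat.abs_sub_floor_le (by positivity)) hδ hn
  have key := abs_tsum_mul_sub_le_of_hasSum_sq_sub (fun n => by unfold Puser; positivity) hw hV
    (mul_pos hKpos hδ0) (by positivity) hB hnear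
  simp only [Pblock, blockTerm_eq_max_mul]
  refine key.trans (le_of_eq ?_)
  field_simp
  ring

theorem tendsto_of_abs_sub_le_add_div {u : ℕ → ℝ} {L : ℝ}
    (h : ∀ ε > 0, ∃ C, ∀ K : ℕ, 0 < K → |u K - L| ≤ ε + C / K) :
    Tendsto u atTop (𝓝 L) := by
  rw [Metric.tendsto_atTop]
  intro ε hε
  obtain ⟨C, hC⟩ := h (ε / 2) (half_pos hε)
  obtain ⟨N, hN⟩ := (Metric.tendsto_atTop.mp (tendsto_const_div_atTop_nhds_zero_nat C))
    (ε / 2) (half_pos hε)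
  refine ⟨N + 1, fun K hK => ?_⟩
  have hCK := hN K (by omega)
  rw [Real.dist_eq, sub_zero] at hCK
  rw [Real.dist_eq]
  linarith [hC K (by omega), le_abs_self (C / K)]

/-- Proposition 1, under-provisioned case: if `0 < T̄ < μ` then
`P_b(K, ⌊K·T̄⌋) → 1 − T̄/μ` as `K → ∞`. -/
theorem Pblock_limit_under (μ : ℝ) (hμ : 0 < μ) (Tbar : ℝ)
    (hT0 : 0 < Tbar) (hT : Tbar < μ) :
    Filter.Tendsto (fun K : ℕ => Pblock μ K ⌊(K : ℝ) * Tbar⌋₊)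
      Filter.atTop (nhds (1 - Tbar / μ)) := by
  refine tendsto_of_abs_sub_le_add_div fun ε hε => ?_
  set δ := min (μ / 2) (ε * μ ^ 2 / (2 * Tbar))
  have hδ0 : 0 < δ := lt_min (by positivity) (by positivity)
  have hδε : 2 * Tbar * δ / μ ^ 2 ≤ ε := by
    rw [div_le_iff₀ (by positivity), ← le_div_iff₀' (by positivity)]
    exact min_le_right _ _
  refine ⟨2 / μ + 2 / 7 * μ * (μ + 7 / 2) / δ ^ 2, fun K hK => ?_⟩
  exact (abs_Pblock_sub_le hμ hT0.le hT.le hK hδ0 (min_le_left _ _)).trans (by linarith)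
end
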